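/- Let S be an involution semigroup and T ⊆ S. Then T is an HS-stable involution subsemigroup if and only if (1) x H_S² x* ⊆ T for each x ∈ S, (2) Tω ∩ S² = T ∩ S², and (3) T \ S² = T* \ S². -/

import Mathlib

open Pointwise

/-- The set of hermitian squares of an involution semigroup. -/
def hermSq (S : Type*) [Mul S] [Star S] : Set S := {a | ∃ x : S, a = x * star x}

/-- `T` is an involution subsemigroup. -/
def IsInvSub {S : Type*} [Mul S] [Star S] (T : Set S) : Prop :=
  (∀ x ∈ T, ∀ y ∈ T, x * y ∈ T) ∧ ∀ x ∈ T, star x ∈ T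

/-- `T` is an HS-stable involution subsemigroup. -/
def IsHSStable {S : Type*} [Mul S] [Star S] (T : Set S) : Prop :=
  IsInvSub T ∧ hermSq S ⊆ T ∧
    ∀ h ∈ hermSq S, ∀ x y : S, x * h * y ∈ T → x * y ∈ T

/-- The HS-stable involution subsemigroup generated by `B`. -/
def genHS {S : Type*} [Mul S] [Star S] (B : Set S) : Set S :=
  ⋂₀ {T | IsHSStable T ∧ B ⊆ T}

/-- The involution subsemigroup generated by `B`. -/
def genInv {S : Type*} [Mul S] [Star S] (B : Set S) : Set S :=
  ⋂₀ {T | IsInvSub T ∧ B ⊆ T}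

/-- The closure `Tω`. -/
def omegaCl {S : Type*} [Mul S] (T : Set S) : Set S := {s | ∃ t ∈ T, s * t ∈ T}

/-- `S² = {x y : x, y ∈ S}`. -/
def sqSet (S : Type*) [Mul S] : Set S := {a | ∃ x y : S, a = x * y}

/-- Iterated complex product `A 0 * A 1 * ⋯ * A n`. -/
def pprod {S : Type*} [Mul S] (A : ℕ → Set S) : ℕ → Set S
  | 0 => A 0
  | (k+1) => pprod A k * A (k+1)

/-!
For the forward direction, every condition is obtained by multiplying a given element of `T`
by hermitian squares until the result has the shape `x h y` with `h ∈ H_S`, and then cancelling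
`h` by stability. Conversely, condition (2) says that an element `s ∈ S²` lies in `T` as soon as
`s t ∈ T` for some `t ∈ T`; condition (1) supplies such witnesses. One obtains in turn
`H_S ⊆ T`, closure under the involution (inside `S²` from (2), outside from (3)), stability,
and finally closure under multiplication.
-/

section

variable {S : Type*}

lemma mul_mem_sqSet [Mul S] (x y : S) : x * y ∈ sqSet S := ⟨x, y, rfl⟩

lemma mul_star_mem_hermSq [Mul S] [Star S] (x : S) : x * star x ∈ hermSq S := ⟨x, rfl⟩

lemma star_mul_mem_hermSq [Mul S] [InvolutiveStar S] (x : S) : star x * x ∈ hermSq S :=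
  ⟨star x, by rw [star_star]⟩

lemma mem_of_mul_mem [Mul S] {T : Set S} (hω : omegaCl T ∩ sqSet S = T ∩ sqSet S) {s t : S}
    (hs : s ∈ sqSet S) (ht : t ∈ T) (hst : s * t ∈ T) : s ∈ T :=
  (hω.subset ⟨⟨t, ht, hst⟩, hs⟩).1

lemma image_star_eq_self [InvolutiveStar S] {T : Set S} (hstar : ∀ x ∈ T, star x ∈ T) :
    (star ·) '' T = T := by
  ext x
  exact ⟨by rintro ⟨y, hy, rfl⟩; exact hstar y hy,
    fun hx => ⟨star x, hstar x hx, star_star x⟩⟩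

variable [Semigroup S] [StarMul S] {T : Set S}

/-- Condition (1): `x H_S² x* ⊆ T` for every `x`. -/
def ConjHermSqSqSubset (T : Set S) : Prop :=
  ∀ x : S, ∀ h ∈ hermSq S, ∀ h' ∈ hermSq S, x * (h * h') * star x ∈ T

namespace IsHSStable

lemma conjHermSqSqSubset (hT : IsHSStable T) : ConjHermSqSqSubset T := by
  obtain ⟨-, hH, hstab⟩ := hT
  rintro x _ ⟨a, rfl⟩ _ ⟨b, rfl⟩
  refine hstab _ (mul_star_mem_hermSq a) (x * (a * star a * (b * star b))) (star x) ?_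
  convert hH (mul_star_mem_hermSq (x * (a * star a) * b)) using 1
  simp only [star_mul, star_star, mul_assoc]

lemma omegaCl_inter_sqSet (hT : IsHSStable T) :
    omegaCl T ∩ sqSet S = T ∩ sqSet S := by
  obtain ⟨⟨hmul, hstar⟩, hH, hstab⟩ := hT
  ext s
  refine ⟨?_, fun ⟨hs, hsq⟩ => ⟨⟨star s, hstar s hs, hmul _ hs _ (hstar s hs)⟩, hsq⟩⟩
  rintro ⟨⟨t, ht, hst⟩, x, y, rfl⟩
  refine ⟨hstab _ (mul_star_mem_hermSq (y * t)) x y ?_, mul_mem_sqSet x y⟩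
  convert hmul _ (hmul _ hst _ (hstar t ht)) _ (hH (star_mul_mem_hermSq y)) using 1
  simp only [star_mul, mul_assoc]

lemma diff_sqSet_eq_image_star (hT : IsHSStable T) :
    T \ sqSet S = ((star ·) '' T) \ sqSet S := by
  rw [image_star_eq_self hT.1.2]

end IsHSStable

lemma hermSq_subset_of_conj (hconj : ConjHermSqSqSubset T)
    (hω : omegaCl T ∩ sqSet S = T ∩ sqSet S) : hermSq S ⊆ T := by
  rintro _ ⟨x, rfl⟩
  refine mem_of_mul_mem hω (mul_mem_sqSet x (star x))
    (hconj x _ (star_mul_mem_hermSq x) _ (star_mul_mem_hermSq x)) ?_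
  convert hconj (x * star x) _ (mul_star_mem_hermSq x) _ (mul_star_mem_hermSq x) using 1
  simp only [star_mul, star_star, mul_assoc]

lemma star_mul_self_sq_mem_of_conj (hconj : ConjHermSqSqSubset T)
    (hω : omegaCl T ∩ sqSet S = T ∩ sqSet S) (a : S) : star a * a * (star a * a) ∈ T := by
  refine mem_of_mul_mem hω (mul_mem_sqSet _ _)
    (hermSq_subset_of_conj hconj hω (star_mul_mem_hermSq a)) ?_
  convert hconj (star a) _ (mul_star_mem_hermSq a) _ (mul_star_mem_hermSq a) using 1
  simp only [star_star, mul_assoc]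

lemma star_mem_of_conj (hconj : ConjHermSqSqSubset T)
    (hω : omegaCl T ∩ sqSet S = T ∩ sqSet S)
    (hdiff : T \ sqSet S = ((star ·) '' T) \ sqSet S) {a : S} (ha : a ∈ T) :
    star a ∈ T := by
  by_cases hsq : a ∈ sqSet S
  · obtain ⟨x, y, rfl⟩ := hsq
    -- witnesses: `a* · a a* = a* a a*` and `a* a a* · a = (a* a)²`
    have haaa : star (x * y) * (x * y) * star (x * y) ∈ T := by
      refine mem_of_mul_mem hω (mul_mem_sqSet _ _) ha ?_
      simpa only [mul_assoc] using star_mul_self_sq_mem_of_conj hconj hω (x * y)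
    refine mem_of_mul_mem hω (star_mul x y ▸ mul_mem_sqSet _ _)
      (hermSq_subset_of_conj hconj hω (mul_star_mem_hermSq (x * y))) ?_
    simpa only [mul_assoc] using haaa
  · obtain ⟨⟨b, hb, rfl⟩, -⟩ : a ∈ ((star ·) '' T) \ sqSet S := hdiff ▸ ⟨ha, hsq⟩
    simpa only [star_star] using hb

lemma mul_mem_of_mul_hermSq_mul_mem_of_conj (hconj : ConjHermSqSqSubset T)
    (hω : omegaCl T ∩ sqSet S = T ∩ sqSet S)
    (hstar : ∀ a ∈ T, star a ∈ T) {h : S} (hh : h ∈ hermSq S) {x y : S}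
    (hxhy : x * h * y ∈ T) : x * y ∈ T := by
  obtain ⟨w, rfl⟩ := hh
  refine mem_of_mul_mem hω (mul_mem_sqSet x y) (hstar _ hxhy) ?_
  convert hconj x _ (mul_star_mem_hermSq y) _ (mul_star_mem_hermSq w) using 1
  simp only [star_mul, star_star, mul_assoc]

lemma mul_hermSq_mem_of_conj (hconj : ConjHermSqSqSubset T)
    (hω : omegaCl T ∩ sqSet S = T ∩ sqSet S)
    (hstar : ∀ a ∈ T, star a ∈ T) {u h : S} (hu : u ∈ T) (hh : h ∈ hermSq S) : u * h ∈ T := by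
  refine mul_mem_of_mul_hermSq_mul_mem_of_conj hconj hω hstar hh (y := h) ?_
  refine mem_of_mul_mem hω (mul_assoc u h h ▸ mul_mem_sqSet _ _) (hstar u hu) ?_
  simpa only [mul_assoc] using hconj u h hh h hh

lemma mul_mem_of_conj (hconj : ConjHermSqSqSubset T)
    (hω : omegaCl T ∩ sqSet S = T ∩ sqSet S)
    (hstar : ∀ a ∈ T, star a ∈ T) {a b : S} (ha : a ∈ T) (hb : b ∈ T) : a * b ∈ T := by
  refine mul_mem_of_mul_hermSq_mul_mem_of_conj hconj hω hstar (star_mul_mem_hermSq a) ?_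
  refine mem_of_mul_mem hω (mul_assoc a _ b ▸ mul_mem_sqSet _ _) (hstar b hb) ?_
  have haa := mul_hermSq_mem_of_conj hconj hω hstar ha (star_mul_mem_hermSq a)
  simpa only [mul_assoc] using
    mul_hermSq_mem_of_conj hconj hω hstar haa (mul_star_mem_hermSq b)

end

theorem stmt13 {S : Type*} [Semigroup S] [StarMul S] (T : Set S) :
    IsHSStable T ↔
      ((∀ x : S, ∀ h ∈ hermSq S, ∀ h' ∈ hermSq S, x * (h * h') * star x ∈ T) ∧
        omegaCl T ∩ sqSet S = T ∩ sqSet S ∧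
        T \ sqSet S = ((star ·) '' T) \ sqSet S) := by
  refine ⟨fun hT => ⟨hT.conjHermSqSqSubset, hT.omegaCl_inter_sqSet,
    hT.diff_sqSet_eq_image_star⟩, ?_⟩
  rintro ⟨hconj, hω, hdiff⟩
  have hstar : ∀ a ∈ T, star a ∈ T := fun _ => star_mem_of_conj hconj hω hdiff
  exact ⟨⟨fun _ ha _ hb => mul_mem_of_conj hconj hω hstar ha hb, hstar⟩,
    hermSq_subset_of_conj hconj hω,
    fun _ hh _ _ => mul_mem_of_mul_hermSq_mul_mem_of_conj hconj hω hstar hh⟩
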